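/- Let ℓ ≥ 2 and let A_1, …, A_ℓ be pairwise disjoint finite nonempty sets with union V. Let 𝒮 be a family of subsets of V such that |S ∩ A_i| = 1 for every S ∈ 𝒮 and every i, and for any two distinct S, T ∈ 𝒮 the number of indices i with S ∩ T ∩ A_i = ∅ is odd. Suppose |𝒮| is odd. For X ⊆ V let χ_X ∈ 𝔽₂^V denote its characteristic vector. If there are coefficients α(X) ∈ 𝔽₂ for X ∈ 𝒮 ∪ {A_1, …, A_ℓ}, not all zero, with ∑_{X} α(X)·χ_X = 0, then α(X) = 1 for every X ∈ 𝒮 ∪ {A_1, …, A_ℓ} (in particular this linear dependency is unique). -/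

import Mathlib

/-- `𝒮` is a family of subsets of `V = A 0 ∪ … ∪ A (ℓ-1)` such that `|S ∩ A i| = 1` for all
`S ∈ 𝒮` and all `i`, and for distinct `S, T ∈ 𝒮` the number of indices `i` with
`S ∩ T ∩ A i = ∅` is odd. -/
def IsXorSystem {α : Type*} [DecidableEq α] (ℓ : ℕ)
    (A : Fin ℓ → Finset α) (𝒮 : Finset (Finset α)) : Prop :=
  (∀ S ∈ 𝒮, S ⊆ Finset.univ.biUnion A) ∧
  (∀ S ∈ 𝒮, ∀ i, (S ∩ A i).card = 1) ∧
  (∀ S ∈ 𝒮, ∀ T ∈ 𝒮, S ≠ T →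
    Odd ((Finset.univ.filter (fun i => S ∩ T ∩ A i = ∅)).card))

/-- The characteristic vector of a finite set, with values in `𝔽₂`. -/
def charVec {α : Type*} [DecidableEq α] (X : Finset α) : α → ZMod 2 :=
  fun v => if v ∈ X then 1 else 0

private lemma oddcast {n : ℕ} (h : Odd n) : (n : ZMod 2) = 1 := by
  obtain ⟨k, rfl⟩ := h
  push_cast
  have h2 : (2 : ZMod 2) = 0 := by decide
  rw [h2, zero_mul, zero_add]

private lemma ip_eq {α : Type*} [DecidableEq α] (X W : Finset α) :
    ∑ v ∈ W, charVec X v = ((X ∩ W).card : ZMod 2) := by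
  unfold charVec
  rw [Finset.sum_boole, Finset.filter_mem_eq_inter, Finset.inter_comm]

/-- If `|𝒮|` is odd and the characteristic vectors of the members of
`𝒮 ∪ {A 0, …, A (ℓ-1)}` admit a nontrivial linear dependency over `𝔽₂`, then all
coefficients of this dependency equal `1`. -/
theorem stmt_8 {α : Type*} [DecidableEq α] (ℓ : ℕ) (hℓ : 2 ≤ ℓ)
    (A : Fin ℓ → Finset α)
    (hdisj : ∀ i j, i ≠ j → Disjoint (A i) (A j))
    (hne : ∀ i, (A i).Nonempty)
    (𝒮 : Finset (Finset α)) (hS : IsXorSystem ℓ A 𝒮)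
    (hodd : Odd 𝒮.card)
    (c : Finset α → ZMod 2)
    (hnz : ∃ X ∈ 𝒮 ∪ Finset.image A Finset.univ, c X ≠ 0)
    (hdep : ∑ X ∈ 𝒮 ∪ Finset.image A Finset.univ, c X • charVec X
      = (0 : α → ZMod 2)) :
    ∀ X ∈ 𝒮 ∪ Finset.image A Finset.univ, c X = 1 := by
  classical
  obtain ⟨hsub, hone, hpair⟩ := hS
  set U := 𝒮 ∪ Finset.image A Finset.univ with hU
  -- A is injective
  have hAinj : ∀ i j : Fin ℓ, A i = A j → i = j := by
    intro i j h
    by_contra hij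
    have hd := hdisj i j hij
    rw [h] at hd
    exact (hne j).ne_empty (by simpa using disjoint_self.mp hd)
  -- the A i are not members of 𝒮
  have hAnotS : ∀ i, A i ∉ 𝒮 := by
    intro i hi
    have h1 : 1 < Fintype.card (Fin ℓ) := by rw [Fintype.card_fin]; omega
    obtain ⟨j, hj⟩ := Fintype.exists_ne_of_one_lt_card h1 i
    have h2 := hone (A i) hi j
    have h0 : A i ∩ A j = ∅ :=
      Finset.disjoint_iff_inter_eq_empty.mp (hdisj i j (Ne.symm hj))
    rw [h0] at h2
    simp at h2
  have hdisjU : Disjoint 𝒮 (Finset.image A Finset.univ) := by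
    rw [Finset.disjoint_right]
    intro X hX
    obtain ⟨i, _, rfl⟩ := Finset.mem_image.mp hX
    exact hAnotS i
  -- partition cardinality
  have hcard : ∀ B : Finset α, B ⊆ Finset.univ.biUnion A →
      B.card = ∑ i, (B ∩ A i).card := by
    intro B hB
    have hBeq : B = Finset.univ.biUnion (fun i => B ∩ A i) := by
      ext v
      simp only [Finset.mem_biUnion, Finset.mem_inter, Finset.mem_univ, true_and]
      constructor
      · intro hv
        obtain ⟨i, _, hvi⟩ := Finset.mem_biUnion.mp (hB hv)
        exact ⟨i, hv, hvi⟩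
      · rintro ⟨i, hv, _⟩
        exact hv
    conv_lhs => rw [hBeq]
    rw [Finset.card_biUnion]
    intro i _ j _ hij
    exact (hdisj i j hij).mono Finset.inter_subset_right Finset.inter_subset_right
  -- main identity: pairing the dependency with any finite set W
  have key : ∀ W : Finset α,
      (∑ S ∈ 𝒮, c S * ((S ∩ W).card : ZMod 2)) +
      (∑ i, c (A i) * ((A i ∩ W).card : ZMod 2)) = 0 := by
    intro W
    have h0 : ∑ v ∈ W, (∑ X ∈ U, c X • charVec X) v = 0 := by
      rw [hdep]
      simp
    have h1 : ∑ X ∈ U, c X * ((X ∩ W).card : ZMod 2) = 0 := by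
      calc ∑ X ∈ U, c X * ((X ∩ W).card : ZMod 2)
          = ∑ X ∈ U, ∑ v ∈ W, c X * charVec X v := by
            refine Finset.sum_congr rfl fun X _ => ?_
            rw [← Finset.mul_sum, ip_eq]
        _ = ∑ v ∈ W, ∑ X ∈ U, c X * charVec X v := Finset.sum_comm
        _ = 0 := by
            simpa only [Finset.sum_apply, Pi.smul_apply, smul_eq_mul] using h0
    rwa [hU, Finset.sum_union hdisjU,
      Finset.sum_image (fun i _ j _ h => hAinj i j h)] at h1
  set σ : ZMod 2 := ∑ S ∈ 𝒮, c S with hσ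
  set a : ZMod 2 := ∑ i, c (A i) with ha
  set L : ZMod 2 := ((ℓ : ℕ) : ZMod 2) with hL
  -- pairing with T ∈ 𝒮
  have eqT : ∀ T ∈ 𝒮, σ * (L + 1) + c T + a = 0 := by
    intro T hT
    have hk := key T
    have hterm : ∀ S ∈ 𝒮, ((S ∩ T).card : ZMod 2)
        = (L + 1) + (if S = T then 1 else 0) := by
      intro S hS'
      by_cases hST : S = T
      · subst hST
        rw [Finset.inter_self]
        have : S.card = ℓ := by
          rw [hcard S (hsub S hS')]
          simp [hone S hS']
        rw [this, if_pos rfl]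
        have h2 : (1 + 1 : ZMod 2) = 0 := by decide
        rw [hL, add_assoc, h2, add_zero]
      · rw [if_neg hST, add_zero]
        have hST' : (S ∩ T).card = ∑ i, (S ∩ T ∩ A i).card := by
          apply hcard
          exact (Finset.inter_subset_left).trans (hsub S hS')
        have hsmall : ∀ i : Fin ℓ, ((S ∩ T ∩ A i).card : ZMod 2)
            = 1 + (if S ∩ T ∩ A i = ∅ then 1 else 0) := by
          intro i
          have hle : (S ∩ T ∩ A i).card ≤ 1 := by
            have := Finset.card_le_card
              (Finset.inter_subset_inter
                (Finset.inter_subset_left : S ∩ T ⊆ S)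
                (Finset.Subset.refl (A i)))
            rw [hone S hS' i] at this
            exact this
          interval_cases h : (S ∩ T ∩ A i).card
          · rw [if_pos (Finset.card_eq_zero.mp h)]
            decide
          · rw [if_neg]
            · decide
            · intro he
              rw [he] at h
              simp at h
        calc ((S ∩ T).card : ZMod 2)
            = ∑ i, ((S ∩ T ∩ A i).card : ZMod 2) := by rw [hST']; push_cast; rfl
          _ = ∑ i : Fin ℓ, (1 + (if S ∩ T ∩ A i = ∅ then 1 else 0)) :=
              Finset.sum_congr rfl fun i _ => hsmall i
          _ = (∑ _i : Fin ℓ, (1 : ZMod 2)) +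
              ∑ i : Fin ℓ, (if S ∩ T ∩ A i = ∅ then (1 : ZMod 2) else 0) :=
              Finset.sum_add_distrib
          _ = L + 1 := by
              rw [Finset.sum_boole]
              congr 1
              · simp [hL]
              · exact oddcast (hpair S hS' T hT hST)
    have hfirst : ∑ S ∈ 𝒮, c S * ((S ∩ T).card : ZMod 2)
        = σ * (L + 1) + c T := by
      calc ∑ S ∈ 𝒮, c S * ((S ∩ T).card : ZMod 2)
          = ∑ S ∈ 𝒮, (c S * (L + 1) + (if S = T then c S else 0)) := by
            refine Finset.sum_congr rfl fun S hS' => ?_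
            rw [hterm S hS', mul_add, mul_ite, mul_one, mul_zero]
        _ = σ * (L + 1) + c T := by
            rw [Finset.sum_add_distrib, ← Finset.sum_mul, Finset.sum_ite_eq' 𝒮 T c,
              if_pos hT]
    have hsecond : ∑ i, c (A i) * ((A i ∩ T).card : ZMod 2) = a := by
      refine Finset.sum_congr rfl (fun i _ => ?_) |>.trans rfl
      rw [Finset.inter_comm, hone T hT i]
      norm_num
    rw [hfirst, hsecond] at hk
    exact hk
  -- pairing with A i
  have eqA : ∀ i, σ + c (A i) * (((A i).card : ℕ) : ZMod 2) = 0 := by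
    intro i
    have hk := key (A i)
    have hfirst : ∑ S ∈ 𝒮, c S * ((S ∩ A i).card : ZMod 2) = σ := by
      refine Finset.sum_congr rfl (fun S hS' => ?_) |>.trans rfl
      rw [hone S hS' i]
      norm_num
    have hsecond : ∑ j, c (A j) * ((A j ∩ A i).card : ZMod 2)
        = c (A i) * (((A i).card : ℕ) : ZMod 2) := by
      rw [Finset.sum_eq_single i]
      · rw [Finset.inter_self]
      · intro j _ hj
        have h0 : A j ∩ A i = ∅ :=
          Finset.disjoint_iff_inter_eq_empty.mp (hdisj j i hj)
        rw [h0]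
        simp
      · intro h
        exact absurd (Finset.mem_univ i) h
    rw [hfirst, hsecond] at hk
    exact hk
  -- all coefficients on 𝒮 are equal to k := σ*(L+1)+a, and σ = k
  have halg1 : ∀ x y z : ZMod 2, y + x + z = 0 → x = y + z := by decide
  have hcS : ∀ T ∈ 𝒮, c T = σ * (L + 1) + a :=
    fun T hT => halg1 (c T) (σ * (L + 1)) a (eqT T hT)
  have hσk : σ = σ * (L + 1) + a := by
    have : σ = ∑ T ∈ 𝒮, (σ * (L + 1) + a) := by
      rw [hσ]
      exact Finset.sum_congr rfl hcS
    rw [Finset.sum_const, nsmul_eq_mul, oddcast hodd, one_mul] at this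
    exact this
  have hcSσ : ∀ T ∈ 𝒮, c T = σ := fun T hT => (hcS T hT).trans hσk.symm
  -- σ = 1
  have hσ1 : σ = 1 := by
    rcases (by decide : ∀ x : ZMod 2, x = 0 ∨ x = 1) σ with h0 | h1
    · exfalso
      -- all coefficients vanish, contradicting hnz
      have hcA0 : ∀ i, c (A i) = 0 := by
        intro i
        obtain ⟨v, hv⟩ := hne i
        have hv0 := congrFun hdep v
        simp only [Finset.sum_apply, Pi.smul_apply, smul_eq_mul, Pi.zero_apply] at hv0
        rw [Finset.sum_union hdisjU,
          Finset.sum_image (fun i _ j _ h => hAinj i j h)] at hv0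
        have hS0 : ∑ S ∈ 𝒮, c S * charVec S v = 0 := by
          refine Finset.sum_eq_zero fun S hS' => ?_
          rw [hcSσ S hS', h0, zero_mul]
        have hA0 : ∑ j, c (A j) * charVec (A j) v = c (A i) := by
          rw [Finset.sum_eq_single i]
          · unfold charVec
            rw [if_pos hv, mul_one]
          · intro j _ hj
            have : v ∉ A j := fun hvj =>
              (Finset.disjoint_left.mp (hdisj j i hj)) hvj hv
            unfold charVec
            rw [if_neg this, mul_zero]
          · intro h
            exact absurd (Finset.mem_univ i) h
        rw [hS0, hA0, zero_add] at hv0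
        exact hv0
      obtain ⟨X, hX, hXne⟩ := hnz
      rcases Finset.mem_union.mp hX with hX | hX
      · exact hXne ((hcSσ X hX).trans h0)
      · obtain ⟨i, _, rfl⟩ := Finset.mem_image.mp hX
        exact hXne (hcA0 i)
    · exact h1
  -- conclude
  intro X hX
  rcases Finset.mem_union.mp hX with hX | hX
  · exact (hcSσ X hX).trans hσ1
  · obtain ⟨i, _, rfl⟩ := Finset.mem_image.mp hX
    have halg2 : ∀ x y : ZMod 2, 1 + x * y = 0 → x = 1 := by decide
    have h := eqA i
    rw [hσ1] at h
    exact halg2 _ _ h
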